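/- arXiv:1912.05740 — 3 statements merged into one kernel-verified Lean document; each statement's English description precedes it below -/
import Mathlib

section
/- The number of pairs (x, y) with x, y in [0, 12), x ≠ y, satisfying both y ≡ 12x (mod 12) and x ≡ 12y (mod 12) is 132. (These are the ambiguous clock positions in a 12-hour period where the hour and minute hands of equal length cannot be distinguished, excluding positions where the hands coincide.) -/
noncomputable def clockf (n : ℕ) : ℝ × ℝ :=
  (12 * (n : ℝ) / 143, 12 * ((12 * n % 143 : ℕ) : ℝ) / 143)

set_option maxRecDepth 40000 in
/-- Ambiguous clock positions: the number of pairs `(x, y)` with `x, y ∈ [0, 12)`,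
`x ≠ y`, satisfying `y ≡ 12 x (mod 12)` and `x ≡ 12 y (mod 12)` is `132`. -/
theorem ambiguous_clock_positions :
    Set.ncard {p : ℝ × ℝ | p.1 ∈ Set.Ico (0 : ℝ) 12 ∧ p.2 ∈ Set.Ico (0 : ℝ) 12 ∧
      p.1 ≠ p.2 ∧ (∃ k : ℤ, p.2 - 12 * p.1 = 12 * k) ∧
      (∃ m : ℤ, p.1 - 12 * p.2 = 12 * m)} = 132 := by
  have hset : {p : ℝ × ℝ | p.1 ∈ Set.Ico (0 : ℝ) 12 ∧ p.2 ∈ Set.Ico (0 : ℝ) 12 ∧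
      p.1 ≠ p.2 ∧ (∃ k : ℤ, p.2 - 12 * p.1 = 12 * k) ∧
      (∃ m : ℤ, p.1 - 12 * p.2 = 12 * m)} =
      ↑(((Finset.range 143).filter (fun n => ¬ (13 ∣ n))).image clockf) := by
    ext p
    simp only [Set.mem_setOf_eq, Finset.coe_image, Set.mem_image, Finset.mem_coe,
      Finset.mem_filter, Finset.mem_range, Set.mem_Ico]
    constructor
    · rintro ⟨⟨hx0, hx12⟩, ⟨hy0, hy12⟩, hxy, ⟨k, hk⟩, ⟨m, hm⟩⟩
      set N : ℤ := -(12 * k + m) with hNdef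
      have hNx : (143 : ℝ) * p.1 = 12 * N := by push_cast [hNdef]; linarith
      have hN0 : 0 ≤ N := by
        by_contra h
        push_neg at h
        have : (N : ℝ) < 0 := by exact_mod_cast h
        nlinarith
      have hN143 : N < 143 := by
        by_contra h
        push_neg at h
        have : (143 : ℝ) ≤ N := by exact_mod_cast h
        nlinarith
      set n := N.toNat with hndef
      have hnN : (n : ℤ) = N := Int.toNat_of_nonneg hN0
      have hn143 : n < 143 := by omega
      have hnR : (n : ℝ) = (N : ℝ) := by exact_mod_cast hnN
      have hx' : p.1 = 12 * (n : ℝ) / 143 := by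
        rw [hnR, eq_div_iff (by norm_num : (143:ℝ) ≠ 0)]; linarith
      set r := 12 * n % 143 with hrdef
      set q := 12 * n / 143 with hqdef
      have hqr : 12 * n = 143 * q + r := by omega
      have hr143 : r < 143 := by omega
      have h12 : (12 : ℝ) * n = 143 * q + r := by exact_mod_cast hqr
      have hrR0 : (0:ℝ) ≤ (r : ℝ) := by positivity
      have hrR : (r : ℝ) < 143 := by exact_mod_cast hr143
      have h143x : (143 : ℝ) * p.1 = 12 * n := by rw [hx']; field_simp
      have hy2 : p.2 = 12 * (q:ℝ) + 12 * k + 12 * r / 143 := by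
        have h1 : (143:ℝ) * p.2 = 143 * 12 * p.1 + 143 * (12 * k) := by linarith
        have h2 : (143:ℝ) * p.2 = 12 * (143 * q + r) + 143 * (12 * k) := by
          rw [h1]; linarith
        linarith
      have hqk : (q : ℤ) + k = 0 := by
        have hb1 : 12 * (r:ℝ) / 143 < 12 := by
          rw [div_lt_iff₀ (by norm_num : (0:ℝ) < 143)]; linarith
        have hb2 : (0:ℝ) ≤ 12 * (r:ℝ) / 143 := by positivity
        have hlow : (-12 : ℝ) < 12 * ((q:ℝ) + (k:ℝ)) := by linarith
        have hhigh : 12 * ((q:ℝ) + (k:ℝ)) < 12 := by linarith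
        have h1 : (-1 : ℝ) < ((q:ℤ) + k : ℤ) := by push_cast; linarith
        have h2 : (((q:ℤ) + k : ℤ) : ℝ) < 1 := by push_cast; linarith
        have h1' : (-1 : ℤ) < (q:ℤ) + k := by exact_mod_cast h1
        have h2' : ((q:ℤ) + k) < 1 := by exact_mod_cast h2
        omega
      have hy' : p.2 = 12 * (r : ℝ) / 143 := by
        have : (q : ℝ) + (k : ℝ) = 0 := by exact_mod_cast hqk
        rw [hy2]; linarith
      refine ⟨n, ⟨hn143, ?_⟩, ?_⟩
      · intro hd
        have hrn : r = n := by omega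
        apply hxy
        rw [hx', hy', hrn]
      · have : clockf n = (12 * (n : ℝ) / 143, 12 * (r : ℝ) / 143) := by
          simp [clockf, hrdef]
        rw [this, Prod.ext_iff]
        exact ⟨hx'.symm, hy'.symm⟩
    · rintro ⟨n, ⟨hn, hd⟩, rfl⟩
      set r := 12 * n % 143 with hrdef
      set q := 12 * n / 143 with hqdef
      have hqr : 12 * n = 143 * q + r := by omega
      have hr143 : r < 143 := by omega
      have hrn : r ≠ n := by omega
      have h12 : (12 : ℝ) * n = 143 * q + r := by exact_mod_cast hqr
      have hnR : (n : ℝ) < 143 := by exact_mod_cast hn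
      have hrR : (r : ℝ) < 143 := by exact_mod_cast hr143
      have hc1 : (clockf n).1 = 12 * (n : ℝ) / 143 := by simp [clockf]
      have hc2 : (clockf n).2 = 12 * (r : ℝ) / 143 := by simp [clockf, hrdef]
      refine ⟨⟨?_, ?_⟩, ⟨?_, ?_⟩, ?_, ⟨-(q:ℤ), ?_⟩, ⟨12 * (q:ℤ) - n, ?_⟩⟩
      · rw [hc1]; positivity
      · rw [hc1, div_lt_iff₀ (by norm_num : (0:ℝ) < 143)]; linarith
      · rw [hc2]; positivity
      · rw [hc2, div_lt_iff₀ (by norm_num : (0:ℝ) < 143)]; linarith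
      · rw [hc1, hc2]
        intro h
        have h' : (n : ℝ) = (r : ℝ) := by
          field_simp at h
          try exact h
          try exact_mod_cast h
        exact hrn (by exact_mod_cast h'.symm)
      · rw [hc1, hc2]
        push_cast
        field_simp
        linarith
      · rw [hc1, hc2]
        push_cast
        field_simp
        linarith
  rw [hset, Set.ncard_coe_finset, Finset.card_image_of_injOn]
  · decide
  · intro a ha b hb h
    have h1 : (clockf a).1 = (clockf b).1 := by rw [h]
    simp only [clockf] at h1
    field_simp at h1
    exact_mod_cast h1
end

section
/- Let A, B, C be linearly independent vectors in ℝ³ (vertices of a spherical triangle). The poles of the three altitudes, namely (A×B)×C, (B×C)×A, and (C×A)×B, are linearly dependent (span a space of dimension at most 2); hence the three altitude great circles of a spherical triangle have a common point. -/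
open Matrix RealInnerProductSpace

/-! The three poles sum to zero by the Jacobi identity, so they are linearly dependent; their span
is then a proper subspace of `ℝ³`, and any unit vector orthogonal to it lies on all three
altitudes. -/

theorem cross_cross_add_cross_cross_add_cross_cross {R : Type*} [CommRing R] (u v w : Fin 3 → R) :
    u ⨯₃ v ⨯₃ w + v ⨯₃ w ⨯₃ u + w ⨯₃ u ⨯₃ v = 0 := by
  rw [← cross_anticomm w (u ⨯₃ v), ← cross_anticomm u (v ⨯₃ w), ← cross_anticomm v (w ⨯₃ u)]
  linear_combination (norm := module) -jacobi_cross u v w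

theorem not_linearIndependent_of_sum_eq_zero {ι R M : Type*} [Fintype ι] [Nonempty ι]
    [Ring R] [Nontrivial R] [AddCommGroup M] [Module R M] {v : ι → M} (h : ∑ i, v i = 0) :
    ¬ LinearIndependent R v := by
  intro hv
  have := Fintype.linearIndependent_iff.mp hv (fun _ ↦ 1) (by simpa using h) (Classical.arbitrary ι)
  exact one_ne_zero this

theorem exists_norm_eq_one_forall_inner_eq_zero {ι E : Type*} [Fintype ι]
    [NormedAddCommGroup E] [InnerProductSpace ℝ E] [FiniteDimensional ℝ E] {v : ι → E}
    (hcard : Fintype.card ι ≤ Module.finrank ℝ E) (hv : ¬ LinearIndependent ℝ v) :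
    ∃ P : E, ‖P‖ = 1 ∧ ∀ i, ⟪P, v i⟫ = 0 := by
  set K := Submodule.span ℝ (Set.range v)
  have hK : K ≠ ⊤ := fun hK ↦
    hv (linearIndependent_of_top_le_span_of_card_le_finrank hK.ge hcard)
  obtain ⟨x, hxK, hx⟩ := Submodule.exists_mem_ne_zero_of_ne_bot
    (mt Submodule.orthogonal_eq_bot_iff.mp hK)
  refine ⟨(‖x‖⁻¹ : ℝ) • x, norm_smul_inv_norm hx, fun i ↦ ?_⟩
  rw [real_inner_smul_left,
    Submodule.inner_left_of_mem_orthogonal (Submodule.subset_span (Set.mem_range_self i)) hxK, mul_zero]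

theorem spherical_altitudes_concurrent_general (A B C : Fin 3 → ℝ) :
    ¬ LinearIndependent ℝ
        ![crossProduct (crossProduct A B) C, crossProduct (crossProduct B C) A,
          crossProduct (crossProduct C A) B] ∧
    ∃ P : EuclideanSpace ℝ (Fin 3), ‖P‖ = 1 ∧
      ⟪P, (WithLp.toLp 2 (crossProduct (crossProduct A B) C) : EuclideanSpace ℝ (Fin 3))⟫ = 0 ∧
      ⟪P, (WithLp.toLp 2 (crossProduct (crossProduct B C) A) : EuclideanSpace ℝ (Fin 3))⟫ = 0 ∧
      ⟪P, (WithLp.toLp 2 (crossProduct (crossProduct C A) B) : EuclideanSpace ℝ (Fin 3))⟫ = 0 := by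
  have hsum := cross_cross_add_cross_cross_add_cross_cross A B C
  set poles := ![A ⨯₃ B ⨯₃ C, B ⨯₃ C ⨯₃ A, C ⨯₃ A ⨯₃ B]
  have hdep : ¬ LinearIndependent ℝ poles :=
    not_linearIndependent_of_sum_eq_zero (by simpa [poles, Fin.sum_univ_three] using hsum)
  have hdep₂ : ¬ LinearIndependent ℝ (fun i ↦ (WithLp.toLp 2 (poles i) : EuclideanSpace ℝ (Fin 3))) :=
    not_linearIndependent_of_sum_eq_zero (by
      simpa [poles, Fin.sum_univ_three, ← WithLp.toLp_add] using congrArg (WithLp.toLp 2) hsum)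
  obtain ⟨P, hP, horth⟩ := exists_norm_eq_one_forall_inner_eq_zero (by simp) hdep₂
  exact ⟨hdep, P, hP, horth 0, horth 1, horth 2⟩

/-- The poles `(A×B)×C`, `(B×C)×A`, `(C×A)×B` of the three altitudes of a spherical
triangle with linearly independent vertices `A`, `B`, `C` are linearly dependent;
hence there is a point of the unit sphere lying on all three altitude great circles
(a unit vector orthogonal to all three poles). -/
theorem spherical_altitudes_concurrent (A B C : Fin 3 → ℝ)
    (h : LinearIndependent ℝ ![A, B, C]) :
    ¬ LinearIndependent ℝ
        ![crossProduct (crossProduct A B) C, crossProduct (crossProduct B C) A,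
          crossProduct (crossProduct C A) B] ∧
    ∃ P : EuclideanSpace ℝ (Fin 3), ‖P‖ = 1 ∧
      ⟪P, (WithLp.toLp 2 (crossProduct (crossProduct A B) C) : EuclideanSpace ℝ (Fin 3))⟫ = 0 ∧
      ⟪P, (WithLp.toLp 2 (crossProduct (crossProduct B C) A) : EuclideanSpace ℝ (Fin 3))⟫ = 0 ∧
      ⟪P, (WithLp.toLp 2 (crossProduct (crossProduct C A) B) : EuclideanSpace ℝ (Fin 3))⟫ = 0 :=
  spherical_altitudes_concurrent_general A B C
end

section
/- If a rectangular box B₁ with edge lengths a₁, b₁, c₁ is contained (after any rigid motion) in a rectangular box B₂ with edge lengths a₂, b₂, c₂, then a₁ + b₁ + c₁ ≤ a₂ + b₂ + c₂. -/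
/-- The rectangular box `[0,a] × [0,b] × [0,c]` in Euclidean 3-space. -/
def rectBox (a b c : ℝ) : Set (EuclideanSpace ℝ (Fin 3)) :=
  {x | x 0 ∈ Set.Icc 0 a ∧ x 1 ∈ Set.Icc 0 b ∧ x 2 ∈ Set.Icc 0 c}

/-!
The sum of the edges of a box is, up to a universal factor, its mean width. The support function
of the box `∏ᵢ [0, aᵢ]` is `h(u) = ∑ᵢ aᵢ max(uᵢ, 0)`, and since the coordinates are interchangeable
its integral over the unit ball is `(∑ᵢ aᵢ) · ∫ max(x₀, 0)`. If the rigid motion `f = L + v` maps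
`B₁` into `B₂`, then `h₁(L⁻¹u) + ⟪v, u⟫ ≤ h₂(u)` for every `u`. Integrating over the unit ball,
rotation invariance removes `L` and the odd term `⟪v, u⟫` integrates to zero.
-/

open MeasureTheory Metric
open scoped RealInnerProductSpace

section BallIntegral

variable {E : Type*} [NormedAddCommGroup E] [InnerProductSpace ℝ E] [FiniteDimensional ℝ E]
  [MeasurableSpace E] [BorelSpace E]

theorem integral_closedBall_comp_linearIsometryEquiv (L : E ≃ₗᵢ[ℝ] E) (g : E → ℝ) (r : ℝ) :
    ∫ x in closedBall 0 r, g (L x) = ∫ x in closedBall 0 r, g x := by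
  have hball : L ⁻¹' closedBall 0 r = closedBall 0 r := by simp [L.preimage_closedBall]
  conv_lhs => rw [← hball]
  exact L.measurePreserving.setIntegral_preimage_emb L.toHomeomorph.measurableEmbedding g _

theorem integral_closedBall_inner_eq_zero (v : E) (r : ℝ) :
    ∫ x in closedBall 0 r, ⟪v, x⟫ = 0 := by
  have h := integral_closedBall_comp_linearIsometryEquiv (LinearIsometryEquiv.neg ℝ)
    (fun x : E => ⟪v, x⟫) r
  simp only [LinearIsometryEquiv.coe_neg, inner_neg_right, integral_neg] at h
  linarith

end BallIntegral

theorem IsometryEquiv.inner_apply_left {E : Type*} [NormedAddCommGroup E]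
    [InnerProductSpace ℝ E] (f : E ≃ᵢ E) (x u : E) :
    ⟪f x, u⟫ = ⟪x, f.toRealLinearIsometryEquiv.symm u⟫ + ⟪f 0, u⟫ := by
  rw [← f.toRealLinearIsometryEquiv.inner_map_eq_flip, ← inner_add_left,
    toRealLinearIsometryEquiv_apply, sub_add_cancel]

theorem mul_le_mul_max_zero {z e t : ℝ} (hz : 0 ≤ z) (hze : z ≤ e) : z * t ≤ e * max t 0 :=
  calc z * t ≤ z * max t 0 := mul_le_mul_of_nonneg_left (le_max_left t 0) hz
    _ ≤ e * max t 0 := mul_le_mul_of_nonneg_right hze (le_max_right t 0)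

section Box

variable {ι : Type*} [Fintype ι]

theorem EuclideanSpace.real_inner_eq_sum (z u : EuclideanSpace ℝ ι) :
    ⟪z, u⟫ = ∑ i, z i * u i := by
  simp only [PiLp.inner_apply, RCLike.inner_apply', conj_trivial]

def cornerBox (a : ι → ℝ) : Set (EuclideanSpace ℝ ι) :=
  {x | ∀ i, x i ∈ Set.Icc 0 (a i)}

def boxSupport (a : ι → ℝ) (u : EuclideanSpace ℝ ι) : ℝ :=
  ∑ i, a i * max (u i) 0

theorem continuous_boxSupport (a : ι → ℝ) : Continuous (boxSupport a) := by
  unfold boxSupport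
  fun_prop

theorem inner_le_boxSupport {a : ι → ℝ} {z : EuclideanSpace ℝ ι} (hz : z ∈ cornerBox a)
    (u : EuclideanSpace ℝ ι) : ⟪z, u⟫ ≤ boxSupport a u := by
  rw [EuclideanSpace.real_inner_eq_sum, boxSupport]
  exact Finset.sum_le_sum fun i _ => mul_le_mul_max_zero (hz i).1 (hz i).2

theorem exists_inner_eq_boxSupport {a : ι → ℝ} (ha : 0 ≤ a) (u : EuclideanSpace ℝ ι) :
    ∃ z ∈ cornerBox a, ⟪z, u⟫ = boxSupport a u := by
  refine ⟨WithLp.toLp 2 fun i => if 0 ≤ u i then a i else 0, fun i => ?_, ?_⟩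
  · have hai : 0 ≤ a i := ha i
    dsimp only
    split_ifs <;> simp [hai]
  · rw [EuclideanSpace.real_inner_eq_sum, boxSupport]
    refine Finset.sum_congr rfl fun i _ => ?_
    dsimp only
    split_ifs with hu
    · simp [max_eq_left hu]
    · simp [max_eq_right (le_of_not_ge hu)]

theorem boxSupport_symm_add_inner_le {a b : ι → ℝ} (ha : 0 ≤ a)
    {f : EuclideanSpace ℝ ι ≃ᵢ EuclideanSpace ℝ ι} (h : f '' cornerBox a ⊆ cornerBox b)
    (u : EuclideanSpace ℝ ι) :
    boxSupport a (f.toRealLinearIsometryEquiv.symm u) + ⟪f 0, u⟫ ≤ boxSupport b u := by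
  obtain ⟨z, hz, hzu⟩ := exists_inner_eq_boxSupport ha (f.toRealLinearIsometryEquiv.symm u)
  rw [← hzu, ← f.inner_apply_left]
  exact inner_le_boxSupport (h ⟨z, hz, rfl⟩) u

theorem integrableOn_closedBall_max_coord (i : ι) (r : ℝ) :
    IntegrableOn (fun x : EuclideanSpace ℝ ι => max (x i) 0) (closedBall 0 r) :=
  (by fun_prop : Continuous fun x : EuclideanSpace ℝ ι => max (x i) 0).continuousOn
    |>.integrableOn_compact (isCompact_closedBall 0 r)

theorem integral_closedBall_max_coord_eq (i j : ι) (r : ℝ) :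
    ∫ x in closedBall (0 : EuclideanSpace ℝ ι) r, max (x i) 0 =
      ∫ x in closedBall (0 : EuclideanSpace ℝ ι) r, max (x j) 0 := by
  classical
  rw [← integral_closedBall_comp_linearIsometryEquiv
    (LinearIsometryEquiv.piLpCongrLeft 2 ℝ ℝ (Equiv.swap i j))]
  congr 1 with x
  simp [LinearIsometryEquiv.piLpCongrLeft_apply, Equiv.piCongrLeft'_apply]

theorem integral_closedBall_max_coord_pos (i : ι) {r : ℝ} (hr : 0 < r) :
    0 < ∫ x in closedBall (0 : EuclideanSpace ℝ ι) r, max (x i) 0 := by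
  refine (setIntegral_pos_iff_support_of_nonneg_ae
    (ae_of_all _ fun x : EuclideanSpace ℝ ι => le_max_right (x i) 0)
    (integrableOn_closedBall_max_coord i r)).2 ?_
  have hU : IsOpen ({x : EuclideanSpace ℝ ι | 0 < x i} ∩ ball 0 r) :=
    (isOpen_lt continuous_const (by fun_prop)).inter isOpen_ball
  have hne : ({x : EuclideanSpace ℝ ι | 0 < x i} ∩ ball 0 r).Nonempty := by
    classical
    exact ⟨EuclideanSpace.single i (r / 2), by simp [hr], by simp [abs_of_pos hr]; linarith⟩
  refine (hU.measure_pos volume hne).trans_le (measure_mono ?_)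
  rintro x ⟨hx0, hx1⟩
  exact ⟨(max_eq_left hx0.le).trans_ne hx0.ne', ball_subset_closedBall hx1⟩

theorem integral_closedBall_boxSupport (a : ι → ℝ) (i : ι) (r : ℝ) :
    ∫ x in closedBall 0 r, boxSupport a x =
      (∑ j, a j) * ∫ x in closedBall (0 : EuclideanSpace ℝ ι) r, max (x i) 0 := by
  simp only [boxSupport,
    integral_finsetSum _ fun j _ => (integrableOn_closedBall_max_coord j r).const_mul (a j),
    integral_const_mul, integral_closedBall_max_coord_eq _ i, Finset.sum_mul]

theorem sum_le_sum_of_image_cornerBox_subset {a b : ι → ℝ} (ha : 0 ≤ a)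
    (f : EuclideanSpace ℝ ι ≃ᵢ EuclideanSpace ℝ ι) (h : f '' cornerBox a ⊆ cornerBox b) :
    ∑ i, a i ≤ ∑ i, b i := by
  rcases isEmpty_or_nonempty ι with hι | ⟨⟨i⟩⟩
  · simp [Finset.univ_eq_empty]
  set L := f.toRealLinearIsometryEquiv
  have hintegrable {g : EuclideanSpace ℝ ι → ℝ} (hg : Continuous g) : IntegrableOn g (closedBall 0 1) :=
    hg.continuousOn.integrableOn_compact (isCompact_closedBall 0 1)
  have hL : Continuous fun u => boxSupport a (L.symm u) :=
    (continuous_boxSupport a).comp L.symm.continuous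
  have hv : Continuous fun u : EuclideanSpace ℝ ι => ⟪f 0, u⟫ := by fun_prop
  have hmono : ∫ u in closedBall 0 1, (boxSupport a (L.symm u) + ⟪f 0, u⟫) ≤
      ∫ u in closedBall 0 1, boxSupport b u :=
    setIntegral_mono (hintegrable (hL.add hv)) (hintegrable (continuous_boxSupport b))
      (boxSupport_symm_add_inner_le ha h)
  rw [integral_add (hintegrable hL) (hintegrable hv), integral_closedBall_inner_eq_zero, add_zero,
    integral_closedBall_comp_linearIsometryEquiv L.symm (boxSupport a),
    integral_closedBall_boxSupport a i, integral_closedBall_boxSupport b i] at hmono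
  exact le_of_mul_le_mul_right hmono (integral_closedBall_max_coord_pos i one_pos)

end Box

theorem rectBox_eq_cornerBox (a b c : ℝ) : rectBox a b c = cornerBox ![a, b, c] := by
  ext x
  simp [rectBox, cornerBox, Fin.forall_fin_succ]

theorem box_in_box_sum_edges_general (a₁ b₁ c₁ a₂ b₂ c₂ : ℝ)
    (ha₁ : 0 ≤ a₁) (hb₁ : 0 ≤ b₁) (hc₁ : 0 ≤ c₁)
    (f : EuclideanSpace ℝ (Fin 3) ≃ᵢ EuclideanSpace ℝ (Fin 3))
    (h : f '' rectBox a₁ b₁ c₁ ⊆ rectBox a₂ b₂ c₂) :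
    a₁ + b₁ + c₁ ≤ a₂ + b₂ + c₂ := by
  have ha : 0 ≤ ![a₁, b₁, c₁] := by
    intro i
    fin_cases i <;> assumption
  rw [rectBox_eq_cornerBox, rectBox_eq_cornerBox] at h
  simpa [Fin.sum_univ_three] using sum_le_sum_of_image_cornerBox_subset ha f h

/-- Cheating with luggage is impossible: if a rectangular box with edge lengths
`a₁, b₁, c₁` fits, after a rigid motion, inside a box with edge lengths
`a₂, b₂, c₂`, then `a₁ + b₁ + c₁ ≤ a₂ + b₂ + c₂`. -/
theorem box_in_box_sum_edges (a₁ b₁ c₁ a₂ b₂ c₂ : ℝ)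
    (ha₁ : 0 ≤ a₁) (hb₁ : 0 ≤ b₁) (hc₁ : 0 ≤ c₁)
    (ha₂ : 0 ≤ a₂) (hb₂ : 0 ≤ b₂) (hc₂ : 0 ≤ c₂)
    (f : EuclideanSpace ℝ (Fin 3) ≃ᵢ EuclideanSpace ℝ (Fin 3))
    (h : f '' rectBox a₁ b₁ c₁ ⊆ rectBox a₂ b₂ c₂) :
    a₁ + b₁ + c₁ ≤ a₂ + b₂ + c₂ :=
  box_in_box_sum_edges_general a₁ b₁ c₁ a₂ b₂ c₂ ha₁ hb₁ hc₁ f h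
end
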